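/- arXiv:2409.13128 — 8 statements merged into one kernel-verified Lean document; each statement's English description precedes it below -/
import Mathlib

section
/- Let L be a graph Laplacian matrix indexed by a finite set V, let S ⊆ V with T = V \ S, and suppose the principal submatrix L_{SS} is invertible. Then the Schur complement L_{TT} − L_{TS} L_{SS}^{-1} L_{ST} is again a graph Laplacian matrix indexed by T (i.e., it is symmetric, its off-diagonal entries are nonpositive, and each of its column sums is zero). -/
open Matrix BigOperators

/-- The Schur complement of `S` in `A`, as a matrix indexed by the complement of `S`. -/
noncomputable def schurCompl {V : Type*} [Fintype V] [DecidableEq V]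
    (A : Matrix V V ℝ) (S : Finset V) : Matrix ↥Sᶜ ↥Sᶜ ℝ :=
  A.submatrix (fun a : ↥Sᶜ => (a : V)) (fun a : ↥Sᶜ => (a : V))
    - A.submatrix (fun a : ↥Sᶜ => (a : V)) (fun a : ↥S => (a : V))
      * (A.submatrix (fun a : ↥S => (a : V)) (fun a : ↥S => (a : V)))⁻¹
      * A.submatrix (fun a : ↥S => (a : V)) (fun a : ↥Sᶜ => (a : V))

/-! The principal block `L_SS` is a symmetric Z-matrix whose column sums are nonnegative (the column
of `s` sums to the weight of the edges from `s` to `T`), so it is positive semidefinite. An invertible positive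
semidefinite Z-matrix is inverse-positive: if `A x ≥ 0` and `m` is the negative part of `x`, then
`mᵀ A m ≤ 0`, hence `A m = 0` and `m = 0`. So `L_TS L_SS⁻¹ L_ST ≥ 0` entrywise, which gives the
sign pattern, and the zero column sums of `L` give `1ᵀ L_TS = -1ᵀ L_SS`, `1ᵀ L_ST = -1ᵀ L_TT`, so
`1ᵀ (L_TT - L_TS L_SS⁻¹ L_ST) = 1ᵀ L_TT + 1ᵀ L_ST = 0`. -/

namespace Matrix

variable {n : Type*} [Fintype n]

theorem dotProduct_mulVec_self_nonneg_of_offDiag_nonpos {R : Type*} [Field R] [LinearOrder R]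
    [IsStrictOrderedRing R] {A : Matrix n n R} (hoff : ∀ i j, i ≠ j → A i j ≤ 0)
    (hrow : ∀ i, 0 ≤ ∑ j, A i j) (hcol : ∀ j, 0 ≤ ∑ i, A i j) (x : n → R) : 0 ≤ x ⬝ᵥ A *ᵥ x := by
  have hterm : ∀ i j, A i j * x i ^ 2 / 2 + A i j * x j ^ 2 / 2 ≤ x i * (A i j * x j) := by
    intro i j
    rcases eq_or_ne i j with rfl | hij
    · exact le_of_eq (by ring)
    · nlinarith [mul_nonpos_of_nonpos_of_nonneg (hoff i j hij) (sq_nonneg (x i - x j))]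
  calc 0 ≤ ∑ i, (∑ j, A i j) * x i ^ 2 / 2 + ∑ j, (∑ i, A i j) * x j ^ 2 / 2 := by
        refine add_nonneg (Finset.sum_nonneg fun i _ => ?_) (Finset.sum_nonneg fun j _ => ?_)
        · have := hrow i; positivity
        · have := hcol j; positivity
    _ = ∑ i, ∑ j, (A i j * x i ^ 2 / 2 + A i j * x j ^ 2 / 2) := by
        simp only [Finset.sum_add_distrib, Finset.sum_mul, Finset.sum_div]
        rw [Finset.sum_comm (f := fun i j => A i j * x j ^ 2 / 2)]
    _ ≤ ∑ i, ∑ j, x i * (A i j * x j) :=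
        Finset.sum_le_sum fun i _ => Finset.sum_le_sum fun j _ => hterm i j
    _ = x ⬝ᵥ A *ᵥ x := by simp only [dotProduct, mulVec, Finset.mul_sum]

theorem posSemidef_of_isSymm_of_offDiag_nonpos {A : Matrix n n ℝ} (hsym : A.IsSymm)
    (hoff : ∀ i j, i ≠ j → A i j ≤ 0) (hcol : ∀ j, 0 ≤ ∑ i, A i j) : A.PosSemidef := by
  have hrow : ∀ i, 0 ≤ ∑ j, A i j := fun i => by
    simpa only [← hsym.apply i] using hcol i
  refine posSemidef_iff_dotProduct_mulVec.mpr ⟨hsym, fun x => ?_⟩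
  simpa only [star_trivial] using dotProduct_mulVec_self_nonneg_of_offDiag_nonpos hoff hrow hcol x

variable [DecidableEq n]

theorem PosSemidef.nonneg_of_nonneg_mulVec {A : Matrix n n ℝ} (hA : A.PosSemidef)
    (hoff : ∀ i j, i ≠ j → A i j ≤ 0) (hdet : IsUnit A.det) {x : n → ℝ}
    (hx : 0 ≤ A *ᵥ x) : 0 ≤ x := by
  have hmp : x⁻ ⬝ᵥ A *ᵥ x⁺ ≤ 0 := by
    refine Finset.sum_nonpos fun i _ => ?_
    rw [mulVec, dotProduct, Finset.mul_sum]
    refine Finset.sum_nonpos fun k _ => ?_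
    rcases eq_or_ne i k with rfl | hik
    · rcases le_total (x i) 0 with h | h
      · simp [posPart_eq_zero.2 h]
      · simp [negPart_eq_zero.2 h]
    · exact mul_nonpos_of_nonneg_of_nonpos (negPart_nonneg _)
        (mul_nonpos_of_nonpos_of_nonneg (hoff i k hik) (posPart_nonneg _))
  have hmx : 0 ≤ x⁻ ⬝ᵥ A *ᵥ x := dotProduct_nonneg_of_nonneg (negPart_nonneg x) hx
  have hmm : 0 ≤ x⁻ ⬝ᵥ A *ᵥ x⁻ := by
    simpa only [star_trivial] using hA.dotProduct_mulVec_nonneg x⁻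
  have hsplit : x⁻ ⬝ᵥ A *ᵥ x = x⁻ ⬝ᵥ A *ᵥ x⁺ - x⁻ ⬝ᵥ A *ᵥ x⁻ := by
    rw [← dotProduct_sub, ← mulVec_sub, posPart_sub_negPart]
  have hAm : A *ᵥ x⁻ = 0 := by
    rw [← hA.dotProduct_mulVec_zero_iff, star_trivial]
    linarith
  have hm : x⁻ = 0 :=
    mulVec_injective_iff_isUnit.mpr ((isUnit_iff_isUnit_det A).mpr hdet) (by rw [hAm, mulVec_zero])
  rw [← posPart_sub_negPart x, hm, sub_zero]
  exact posPart_nonneg x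

theorem PosSemidef.inv_apply_nonneg {A : Matrix n n ℝ} (hA : A.PosSemidef)
    (hoff : ∀ i j, i ≠ j → A i j ≤ 0) (hdet : IsUnit A.det) (i j : n) : 0 ≤ A⁻¹ i j := by
  have hcol : 0 ≤ A⁻¹ *ᵥ Pi.single j 1 := by
    refine hA.nonneg_of_nonneg_mulVec hoff hdet ?_
    rw [mulVec_mulVec, mul_nonsing_inv A hdet, one_mulVec]
    exact Pi.single_nonneg.mpr zero_le_one
  simpa [mulVec_single_one] using hcol i

end Matrix

theorem schurCompl_eq {V : Type*} [Fintype V] [DecidableEq V] (A : Matrix V V ℝ) (S : Finset V) :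
    schurCompl A S = A.submatrix ((↑) : ↥Sᶜ → V) ((↑) : ↥Sᶜ → V)
      - A.submatrix ((↑) : ↥Sᶜ → V) ((↑) : S → V) * (A.submatrix ((↑) : S → V) ((↑) : S → V))⁻¹
        * A.submatrix ((↑) : S → V) ((↑) : ↥Sᶜ → V) :=
  rfl

section Laplacian

variable {V : Type*} [Fintype V] [DecidableEq V] {L : Matrix V V ℝ}

theorem one_vecMul_submatrix_add_compl_eq_zero (hcol : ∀ v, ∑ u, L u v = 0)
    (S : Finset V) {ι : Type*} (w : ι → V) :
    (1 : S → ℝ) ᵥ* L.submatrix (↑) w + (1 : ↥Sᶜ → ℝ) ᵥ* L.submatrix (↑) w = 0 := by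
  funext j
  simp only [Pi.add_apply, vecMul, one_dotProduct, submatrix_apply, Pi.zero_apply]
  rw [Finset.sum_coe_sort S (fun u => L u (w j)), Finset.sum_coe_sort Sᶜ (fun u => L u (w j)),
    Finset.sum_add_sum_compl, hcol]

theorem schurCompl_isSymm (hsym : L.IsSymm) (S : Finset V) : (schurCompl L S).IsSymm := by
  have hsub : ∀ {ι κ : Type _} (f : ι → V) (g : κ → V), (L.submatrix f g)ᵀ = L.submatrix g f :=
    fun f g => by rw [transpose_submatrix, hsym.eq]
  rw [IsSymm, schurCompl_eq, transpose_sub, transpose_mul, transpose_mul, hsub, hsub, hsub,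
    transpose_nonsing_inv, hsub, Matrix.mul_assoc]

theorem posSemidef_submatrix_of_laplacian (hsym : L.IsSymm) (hoff : ∀ u v, u ≠ v → L u v ≤ 0)
    (hcol : ∀ v, ∑ u, L u v = 0) (S : Finset V) :
    (L.submatrix ((↑) : S → V) ((↑) : S → V)).PosSemidef := by
  refine posSemidef_of_isSymm_of_offDiag_nonpos (hsym.submatrix _)
    (fun i j hij => hoff i j (Subtype.coe_ne_coe.mpr hij)) fun t => ?_
  have hsum := congrFun (one_vecMul_submatrix_add_compl_eq_zero hcol S
    ((↑) : S → V)) t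
  simp only [Pi.add_apply, vecMul, one_dotProduct, submatrix_apply, Pi.zero_apply] at hsum
  have hout : ∑ u : ↥Sᶜ, L u t ≤ 0 := Finset.sum_nonpos fun u _ =>
    hoff _ _ fun h => Finset.mem_compl.mp u.2 (h ▸ t.2)
  simp only [submatrix_apply]
  linarith

theorem schurCompl_apply_nonpos (hoff : ∀ u v, u ≠ v → L u v ≤ 0) {S : Finset V}
    (hinv_nonneg : ∀ i j, 0 ≤ (L.submatrix ((↑) : S → V) ((↑) : S → V))⁻¹ i j)
    {u v : ↥Sᶜ} (huv : u ≠ v) : schurCompl L S u v ≤ 0 := by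
  have hTS : ∀ (t : ↥Sᶜ) (s : S), (t : V) ≠ s := fun t s h =>
    Finset.mem_compl.mp t.2 (h ▸ s.2)
  rw [schurCompl_eq, Matrix.sub_apply, submatrix_apply, sub_nonpos, mul_apply]
  refine (hoff _ _ (Subtype.coe_ne_coe.mpr huv)).trans (Finset.sum_nonneg fun t _ => ?_)
  refine mul_nonneg_of_nonpos_of_nonpos ?_ (hoff _ _ (hTS v t).symm)
  exact Finset.sum_nonpos fun s _ =>
    mul_nonpos_of_nonpos_of_nonneg (hoff _ _ (hTS u s)) (hinv_nonneg s t)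

theorem sum_schurCompl_apply_eq_zero (hcol : ∀ v, ∑ u, L u v = 0) {S : Finset V}
    (hdet : IsUnit (L.submatrix ((↑) : S → V) ((↑) : S → V)).det) (v : ↥Sᶜ) :
    ∑ u, schurCompl L S u v = 0 := by
  have hA := one_vecMul_submatrix_add_compl_eq_zero hcol S ((↑) : S → V)
  have hB := one_vecMul_submatrix_add_compl_eq_zero hcol S ((↑) : ↥Sᶜ → V)
  have hcancel : (1 : S → ℝ) ᵥ* L.submatrix ((↑) : S → V) ((↑) : S → V)
      ᵥ* (L.submatrix ((↑) : S → V) ((↑) : S → V))⁻¹ = 1 := by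
    rw [vecMul_vecMul, mul_nonsing_inv _ hdet, vecMul_one]
  have hrow : (1 : ↥Sᶜ → ℝ) ᵥ* schurCompl L S = 0 := by
    rw [schurCompl_eq, vecMul_sub, ← vecMul_vecMul, ← vecMul_vecMul,
      eq_neg_of_add_eq_zero_right hA, neg_vecMul, neg_vecMul, hcancel]
    linear_combination hB
  simpa [vecMul, one_dotProduct] using congrFun hrow v

end Laplacian

/-- The Schur complement of a graph Laplacian matrix is again a graph Laplacian matrix:
it is symmetric, has nonpositive off-diagonal entries, and all its column sums are zero. -/
theorem schur_complement_of_laplacian_is_laplacian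
    {V : Type*} [Fintype V] [DecidableEq V]
    (L : Matrix V V ℝ)
    (hsym : L.IsSymm)
    (hoff : ∀ u v : V, u ≠ v → L u v ≤ 0)
    (hdiag : ∀ v : V, L v v = -∑ u ∈ Finset.univ.erase v, L u v)
    (S : Finset V)
    (hinv : IsUnit (L.submatrix (fun a : ↥S => (a : V)) (fun a : ↥S => (a : V))).det) :
    (schurCompl L S).IsSymm
    ∧ (∀ u v : ↥Sᶜ, u ≠ v → schurCompl L S u v ≤ 0)
    ∧ (∀ v : ↥Sᶜ, ∑ u : ↥Sᶜ, schurCompl L S u v = 0) := by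
  have hcol : ∀ v, ∑ u, L u v = 0 := fun v => by
    rw [← Finset.add_sum_erase _ _ (Finset.mem_univ v), hdiag, neg_add_cancel]
  have hinv_nonneg := (posSemidef_submatrix_of_laplacian hsym hoff hcol S).inv_apply_nonneg
    (fun i j hij => hoff i j (Subtype.coe_ne_coe.mpr hij)) hinv
  exact ⟨schurCompl_isSymm hsym S, fun u v => schurCompl_apply_nonpos hoff hinv_nonneg,
    sum_schurCompl_apply_eq_zero hcol hinv⟩
end

section
/- Let K ∈ ℝ^{V×V} be a rate constant matrix on a finite set V with positive stationary vector π, let S ⊆ V with T = V \ S, and suppose K_{SS} is invertible. Then the Schur complement K' = K_{TT} − K_{TS} K_{SS}^{-1} K_{ST} is a rate constant matrix on T; moreover, the restriction π_T of π to T is a stationary vector for K', i.e., K'_{uv} π_v = K'_{vu} π_u for all u, v ∈ T. -/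
open Matrix BigOperators

namespace Matrix

theorem apply_self_eq_neg_sum_erase_iff {ι R : Type*} [Fintype ι] [DecidableEq ι]
    [AddCommGroup R] (A : Matrix ι ι R) (j : ι) :
    A j j = -∑ i ∈ Finset.univ.erase j, A i j ↔ ∑ i, A i j = 0 := by
  rw [← Finset.add_sum_erase _ _ (Finset.mem_univ j), add_eq_zero_iff_eq_neg]

theorem submatrix_mul_diagonal {l m n o R : Type*} [Fintype n] [DecidableEq n] [Fintype o]
    [DecidableEq o] [Semiring R] (A : Matrix m n R) (d : n → R) (f : l → m) (g : o → n) :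
    (A * diagonal d).submatrix f g = A.submatrix f g * diagonal (d ∘ g) := by
  ext a b
  simp [mul_diagonal]

variable {ι : Type*} [Fintype ι]

theorem IsSymm.dotProduct_mulVec_self_eq {G : Matrix ι ι ℝ} (hG : G.IsSymm) (x : ι → ℝ) :
    x ⬝ᵥ G *ᵥ x =
      ∑ j, (∑ i, G i j) * x j ^ 2 - (∑ i, ∑ j, G i j * (x i - x j) ^ 2) / 2 := by
  have hswap : ∑ i, ∑ j, G i j * x i ^ 2 = ∑ i, ∑ j, G i j * x j ^ 2 := by
    rw [Finset.sum_comm]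
    exact Finset.sum_congr rfl fun i _ => Finset.sum_congr rfl fun j _ => by rw [hG.apply]
  have hcol : ∑ j, (∑ i, G i j) * x j ^ 2 = ∑ i, ∑ j, G i j * x j ^ 2 := by
    rw [Finset.sum_comm]
    exact Finset.sum_congr rfl fun j _ => Finset.sum_mul ..
  have hexpand : ∑ i, ∑ j, G i j * (x i - x j) ^ 2 =
      ∑ i, ∑ j, G i j * x i ^ 2 + ∑ i, ∑ j, G i j * x j ^ 2 - 2 * (x ⬝ᵥ G *ᵥ x) := by
    simp only [dotProduct, mulVec, Finset.mul_sum, ← Finset.sum_add_distrib,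
      ← Finset.sum_sub_distrib]
    exact Finset.sum_congr rfl fun i _ => Finset.sum_congr rfl fun j _ => by ring
  rw [hcol, hexpand, hswap]
  ring

theorem posSemidef_of_isSymm_of_offDiag_nonpos_of_sum_nonneg {G : Matrix ι ι ℝ}
    (hG : G.IsSymm) (hoff : ∀ i j, i ≠ j → G i j ≤ 0) (hsum : ∀ j, 0 ≤ ∑ i, G i j) :
    G.PosSemidef := by
  refine posSemidef_iff_dotProduct_mulVec.mpr ⟨isHermitian_iff_isSymm.mpr hG, fun x => ?_⟩
  have hdiag : 0 ≤ ∑ j, (∑ i, G i j) * x j ^ 2 :=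
    Finset.sum_nonneg fun j _ => mul_nonneg (hsum j) (sq_nonneg _)
  have hoffDiag : ∑ i, ∑ j, G i j * (x i - x j) ^ 2 ≤ 0 :=
    Finset.sum_nonpos fun i _ => Finset.sum_nonpos fun j _ => by
      rcases eq_or_ne i j with rfl | hij
      · simp
      · exact mul_nonpos_of_nonpos_of_nonneg (hoff i j hij) (sq_nonneg _)
  rw [star_trivial, hG.dotProduct_mulVec_self_eq]
  linarith

variable [DecidableEq ι]

/-- For a column `x` of `G⁻¹` and `m = x⁻`, `mᵀ G m = mᵀ G x⁺ - m j ≤ 0` because `mᵀ G x⁺` only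
involves off-diagonal entries; positive definiteness then forces `m = 0`. -/
theorem PosDef.inv_apply_nonneg_of_offDiag_nonpos {G : Matrix ι ι ℝ} (hG : G.PosDef)
    (hoff : ∀ i j, i ≠ j → G i j ≤ 0) (i j : ι) : 0 ≤ G⁻¹ i j := by
  set x : ι → ℝ := fun k => G⁻¹ k j
  set m : ι → ℝ := x⁻
  have hGx : G *ᵥ x = Pi.single j 1 := by
    ext k
    change (G * G⁻¹) k j = _
    rw [mul_nonsing_inv G ((isUnit_iff_isUnit_det G).mp hG.isUnit), one_apply, Pi.single_apply]
  have hcross : m ⬝ᵥ G *ᵥ x⁺ ≤ 0 := by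
    simp only [dotProduct, mulVec, Finset.mul_sum]
    refine Finset.sum_nonpos fun k _ => Finset.sum_nonpos fun l _ => ?_
    rcases eq_or_ne k l with rfl | hkl
    · have hzero : m k * x⁺ k = 0 := by
        rcases le_total 0 (x k) with h | h <;> simp [m, h]
      rw [mul_left_comm, hzero, mul_zero]
    · exact mul_nonpos_of_nonneg_of_nonpos (negPart_nonneg _)
        (mul_nonpos_of_nonpos_of_nonneg (hoff k l hkl) (posPart_nonneg _))
  have hquad : m ⬝ᵥ G *ᵥ m ≤ 0 := by
    have hm : m = x⁺ - x := by
      rw [eq_sub_iff_add_eq, add_comm, ← eq_sub_iff_add_eq, posPart_sub_negPart]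
    rw [hm, mulVec_sub, dotProduct_sub, ← hm, hGx, dotProduct_single, mul_one]
    have hmj : 0 ≤ m j := negPart_nonneg (x j)
    linarith
  have hm0 : m = 0 := by
    by_contra hm0
    have := hG.dotProduct_mulVec_pos hm0
    rw [star_trivial] at this
    linarith
  exact negPart_eq_zero.mp (congrFun hm0 i)

theorem inv_apply_nonpos_of_mul_diagonal_isSymm {A : Matrix ι ι ℝ} {q : ι → ℝ}
    (hq : ∀ i, 0 < q i) (hoff : ∀ i j, i ≠ j → 0 ≤ A i j) (hsum : ∀ j, ∑ i, A i j ≤ 0)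
    (hsymm : (A * diagonal q).IsSymm) (hA : IsUnit A.det) (i j : ι) : A⁻¹ i j ≤ 0 := by
  set G := -(A * diagonal q)
  have hGoff : ∀ k l, k ≠ l → G k l ≤ 0 := fun k l hkl => by
    simpa [G, mul_diagonal] using mul_nonneg (hoff k l hkl) (hq l).le
  have hGsum : ∀ l, 0 ≤ ∑ k, G k l := fun l => by
    simpa [G, mul_diagonal, ← Finset.sum_mul] using mul_nonneg (neg_nonneg.mpr (hsum l)) (hq l).le
  have hGpsd : G.PosSemidef :=
    posSemidef_of_isSymm_of_offDiag_nonpos_of_sum_nonneg hsymm.neg hGoff hGsum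
  have hGdet : G.det ≠ 0 := by
    simp only [G, det_neg, det_mul, det_diagonal]
    exact mul_ne_zero (pow_ne_zero _ (by norm_num))
      (mul_ne_zero hA.ne_zero (Finset.prod_ne_zero_iff.mpr fun k _ => (hq k).ne'))
  have hGpd : G.PosDef := hGpsd.posDef_iff_det_ne_zero.mpr hGdet
  have hAinv : A⁻¹ = -(diagonal q * G⁻¹) := by
    refine inv_eq_right_inv ?_
    rw [mul_neg, ← Matrix.mul_assoc, ← neg_mul, mul_nonsing_inv G (isUnit_iff_ne_zero.mpr hGdet)]
  rw [hAinv, neg_apply, diagonal_mul, neg_nonpos]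
  exact mul_nonneg (hq i).le (hGpd.inv_apply_nonneg_of_offDiag_nonpos hGoff i j)

end Matrix

section SchurComplement

variable {V : Type*} [Fintype V] [DecidableEq V] (S : Finset V)

theorem sum_submatrix_apply_nonpos {A : Matrix V V ℝ} (hoff : ∀ u v, u ≠ v → 0 ≤ A u v)
    (hcol : ∀ v, ∑ u, A u v = 0) (t : ↥S) : ∑ s : ↥S, A s t ≤ 0 := by
  have hout : 0 ≤ ∑ u ∈ Sᶜ, A u t := Finset.sum_nonneg fun u hu =>
    hoff u t (ne_of_mem_of_not_mem t.2 (Finset.mem_compl.mp hu)).symm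
  rw [Finset.sum_coe_sort S (fun s => A s t)]
  linarith [Finset.sum_add_sum_compl S (fun u => A u t), hcol t]

theorem schurCompl_transpose (A : Matrix V V ℝ) : schurCompl Aᵀ S = (schurCompl A S)ᵀ := by
  simp only [schurCompl, transpose_sub, transpose_mul, transpose_submatrix, transpose_nonsing_inv,
    Matrix.mul_assoc]

theorem Matrix.IsSymm.schurCompl {A : Matrix V V ℝ} (hA : A.IsSymm) :
    (schurCompl A S).IsSymm := by
  rw [IsSymm, ← schurCompl_transpose, hA]

theorem schurCompl_mul_diagonal (A : Matrix V V ℝ) {p : V → ℝ} (hp : ∀ v ∈ S, p v ≠ 0) :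
    schurCompl (A * diagonal p) S = schurCompl A S * diagonal (fun v : ↥Sᶜ => p v) := by
  have hPS : IsUnit (diagonal (p ∘ fun a : ↥S => (a : V))).det := by
    rw [det_diagonal]
    exact (Finset.prod_ne_zero_iff.mpr fun v _ => hp v.1 v.2).isUnit
  simp only [schurCompl, submatrix_mul_diagonal, Matrix.mul_inv_rev, sub_mul, Matrix.mul_assoc]
  rw [← Matrix.mul_assoc (diagonal _) (diagonal _)⁻¹, mul_nonsing_inv _ hPS, Matrix.one_mul]
  rfl

theorem vecMul_submatrix_add_vecMul_submatrix_compl {β : Type*} (A : Matrix V V ℝ) (x : V → ℝ)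
    (g : β → V) :
    (fun a : ↥S => x a) ᵥ* A.submatrix (fun a : ↥S => (a : V)) g
      + (fun a : ↥Sᶜ => x a) ᵥ* A.submatrix (fun a : ↥Sᶜ => (a : V)) g = (x ᵥ* A) ∘ g := by
  ext b
  simp only [Pi.add_apply, vecMul, dotProduct, submatrix_apply, Function.comp_apply]
  rw [Finset.sum_coe_sort S (fun a => x a * A a (g b)),
    Finset.sum_coe_sort Sᶜ (fun a => x a * A a (g b)), Finset.sum_add_sum_compl]

theorem vecMul_schurCompl_eq_zero {A : Matrix V V ℝ} {x : V → ℝ} (hx : x ᵥ* A = 0)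
    (hA : IsUnit (A.submatrix (fun a : ↥S => (a : V)) (fun a : ↥S => (a : V))).det) :
    (fun a : ↥Sᶜ => x a) ᵥ* schurCompl A S = 0 := by
  have hC : (fun a : ↥Sᶜ => x a) ᵥ* A.submatrix (fun a : ↥Sᶜ => (a : V)) (fun a : ↥S => (a : V))
      = -((fun a : ↥S => x a) ᵥ* A.submatrix (fun a : ↥S => (a : V)) (fun a : ↥S => (a : V))) := by
    rw [eq_neg_iff_add_eq_zero, add_comm, vecMul_submatrix_add_vecMul_submatrix_compl, hx,
      Pi.zero_comp]
  have hD : (fun a : ↥Sᶜ => x a) ᵥ* A.submatrix (fun a : ↥Sᶜ => (a : V)) (fun a : ↥Sᶜ => (a : V))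
      = -((fun a : ↥S => x a) ᵥ* A.submatrix (fun a : ↥S => (a : V)) (fun a : ↥Sᶜ => (a : V))) := by
    rw [eq_neg_iff_add_eq_zero, add_comm, vecMul_submatrix_add_vecMul_submatrix_compl, hx,
      Pi.zero_comp]
  rw [schurCompl, vecMul_sub, ← vecMul_vecMul, ← vecMul_vecMul, hC, hD, neg_vecMul, neg_vecMul,
    vecMul_vecMul _ _ (A.submatrix _ _)⁻¹, mul_nonsing_inv _ hA, vecMul_one, sub_neg_eq_add,
    neg_add_cancel]

theorem schurCompl_apply_nonneg {A : Matrix V V ℝ} (hoff : ∀ u v, u ≠ v → 0 ≤ A u v)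
    (hinv : ∀ s t, (A.submatrix (fun a : ↥S => (a : V)) (fun a : ↥S => (a : V)))⁻¹ s t ≤ 0)
    {u v : ↥Sᶜ} (huv : u ≠ v) : 0 ≤ schurCompl A S u v := by
  have hne (s : ↥S) (t : ↥Sᶜ) : (s : V) ≠ t := ne_of_mem_of_not_mem s.2 (Finset.mem_compl.mp t.2)
  have hcorr : (A.submatrix (fun a : ↥Sᶜ => (a : V)) (fun a : ↥S => (a : V))
      * (A.submatrix (fun a : ↥S => (a : V)) (fun a : ↥S => (a : V)))⁻¹
      * A.submatrix (fun a : ↥S => (a : V)) (fun a : ↥Sᶜ => (a : V))) u v ≤ 0 := by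
    simp only [mul_apply, submatrix_apply]
    exact Finset.sum_nonpos fun t _ => mul_nonpos_of_nonpos_of_nonneg
      (Finset.sum_nonpos fun s _ => mul_nonpos_of_nonneg_of_nonpos
        (hoff _ _ (hne s u).symm) (hinv s t)) (hoff _ _ (hne t v))
  have hdiag : 0 ≤ A u v := hoff u v (Subtype.coe_injective.ne huv)
  rw [schurCompl, Matrix.sub_apply, submatrix_apply]
  linarith

end SchurComplement

/-- The Schur complement of a rate constant matrix is again a rate constant matrix,
with the restriction of the stationary vector as a stationary vector. -/
theorem schur_complement_of_rate_constant_matrix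
    {V : Type*} [Fintype V] [DecidableEq V]
    (K : Matrix V V ℝ) (p : V → ℝ)
    (hp : ∀ v : V, 0 < p v)
    (hRCM1 : ∀ u v : V, u ≠ v → 0 ≤ K u v)
    (hRCM2 : ∀ v : V, K v v = -∑ u ∈ Finset.univ.erase v, K u v)
    (hRCM3 : ∀ u v : V, K u v * p v = K v u * p u)
    (S : Finset V)
    (hinv : IsUnit (K.submatrix (fun a : ↥S => (a : V)) (fun a : ↥S => (a : V))).det) :
    (∀ u v : ↥Sᶜ, u ≠ v → 0 ≤ schurCompl K S u v)
    ∧ (∀ v : ↥Sᶜ, schurCompl K S v v = -∑ u ∈ Finset.univ.erase v, schurCompl K S u v)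
    ∧ (∀ u v : ↥Sᶜ, schurCompl K S u v * p v = schurCompl K S v u * p u) := by
  have hcol (v : V) : ∑ u, K u v = 0 := (apply_self_eq_neg_sum_erase_iff K v).mp (hRCM2 v)
  have hbal : (K * diagonal p).IsSymm := by
    ext u v
    simpa [mul_diagonal] using (hRCM3 u v).symm
  have hbalS := hbal.submatrix (fun a : ↥S => (a : V))
  rw [submatrix_mul_diagonal] at hbalS
  have hinvS := inv_apply_nonpos_of_mul_diagonal_isSymm (fun s : ↥S => hp s)
    (fun s t hst => hRCM1 s t (Subtype.coe_injective.ne hst))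
    (sum_submatrix_apply_nonpos S hRCM1 hcol) hbalS hinv
  refine ⟨fun u v huv => schurCompl_apply_nonneg S hRCM1 hinvS huv, fun v => ?_, fun u v => ?_⟩
  · rw [apply_self_eq_neg_sum_erase_iff]
    have hones : (fun _ => 1) ᵥ* K = 0 :=
      funext fun v => by simpa [vecMul, dotProduct] using hcol v
    simpa [vecMul, dotProduct] using congrFun (vecMul_schurCompl_eq_zero S hones hinv) v
  · have hsymm := IsSymm.schurCompl S hbal
    rw [schurCompl_mul_diagonal S K fun v _ => (hp v).ne'] at hsymm
    simpa [mul_diagonal] using hsymm.apply v u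
end

section
/- Let L ∈ ℝ^{V×V} be a real symmetric positive semidefinite matrix on a finite set V. Then the set function X ↦ log det L_{XX} (with log 0 = −∞) is submodular; equivalently, in determinant form: for all X ⊆ Y ⊆ V and v ∈ V \ Y, det L_{X∪{v}, X∪{v}} · det L_{YY} ≥ det L_{Y∪{v}, Y∪{v}} · det L_{XX}. -/
open Matrix BigOperators

set_option linter.unusedSectionVars false

namespace KotelAux

variable {V : Type*} [Fintype V] [DecidableEq V]

/-- zero-extension of a vector on a finset to the whole type -/
def ext (S : Finset V) (x : ↥S → ℝ) : V → ℝ := fun j => if h : j ∈ S then x ⟨j, h⟩ else 0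

lemma sum_ext_mul (S : Finset V) (x : ↥S → ℝ) (g : V → ℝ) :
    ∑ k : V, ext S x k * g k = ∑ k : ↥S, x k * g ↑k := by
  rw [← Finset.sum_subset (Finset.subset_univ S)
      (by intro k _ hk; simp [ext, hk])]
  rw [Finset.univ_eq_attach, ← Finset.sum_attach S (fun k => ext S x k * g k)]
  refine Finset.sum_congr rfl fun k _ => ?_
  simp [ext, k.2]

lemma ext_ne_zero (S : Finset V) (x : ↥S → ℝ) (hx : x ≠ 0) : ext S x ≠ 0 := by
  obtain ⟨i, hi⟩ : ∃ i, x i ≠ 0 := Function.ne_iff.mp hx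
  intro h
  apply hi
  have := congrFun h (↑i)
  simpa [ext, i.2] using this

/-- principal submatrix -/
def sub (M : Matrix V V ℝ) (S : Finset V) : Matrix ↥S ↥S ℝ :=
  M.submatrix (fun a : ↥S => (a : V)) (fun a : ↥S => (a : V))

lemma mulVec_ext (M : Matrix V V ℝ) (S : Finset V) (x : ↥S → ℝ) (j : V) :
    (M *ᵥ ext S x) j = ∑ k : ↥S, M j ↑k * x k := by
  simp only [mulVec, dotProduct]
  rw [show (fun k => M j k * ext S x k) = fun k => ext S x k * M j k from
    funext fun k => mul_comm _ _, sum_ext_mul]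
  exact Finset.sum_congr rfl fun k _ => mul_comm _ _

lemma dot_ext (S : Finset V) (x : ↥S → ℝ) (g : V → ℝ) :
    ext S x ⬝ᵥ g = ∑ k : ↥S, x k * g ↑k := sum_ext_mul S x g

lemma ext_dot_mulVec (M : Matrix V V ℝ) (S : Finset V) (x : ↥S → ℝ) :
    ext S x ⬝ᵥ (M *ᵥ ext S x) = x ⬝ᵥ (sub M S *ᵥ x) := by
  rw [dot_ext]
  refine Finset.sum_congr rfl fun k _ => ?_
  rw [mulVec_ext]
  rfl

lemma posDef_sub {M : Matrix V V ℝ} (hM : M.PosDef) (S : Finset V) :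
    (sub M S).PosDef := by
  refine PosDef.of_dotProduct_mulVec_pos ?_ ?_
  · have h := hM.1
    ext i j
    simp only [sub, conjTranspose_apply, submatrix_apply, star_trivial]
    have := h.apply (i : V) (j : V)
    simpa using this
  · intro x hx
    have h := hM.dotProduct_mulVec_pos (ext_ne_zero S x hx)
    simpa [ext_dot_mulVec] using h

/-- column of M restricted to S, at column v -/
def cvec (M : Matrix V V ℝ) (S : Finset V) (v : V) : ↥S → ℝ := fun i => M ↑i v

/-- the Schur complement value -/
noncomputable def sval (M : Matrix V V ℝ) (S : Finset V) (v : V) : ℝ :=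
  M v v - cvec M S v ⬝ᵥ ((sub M S)⁻¹ *ᵥ cvec M S v)

/-- the minimizing vector -/
noncomputable def uvec (M : Matrix V V ℝ) (S : Finset V) (v : V) : V → ℝ :=
  fun j => (if j = v then 1 else 0) - ext S ((sub M S)⁻¹ *ᵥ cvec M S v) j

lemma uvec_eq (M : Matrix V V ℝ) (S : Finset V) (v : V) :
    uvec M S v = (fun j => if j = v then (1:ℝ) else 0)
      - ext S ((sub M S)⁻¹ *ᵥ cvec M S v) := rfl

lemma mulVec_single' (M : Matrix V V ℝ) (v j : V) :
    (M *ᵥ fun k => if k = v then (1:ℝ) else 0) j = M j v := by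
  simp [mulVec, dotProduct]

lemma mulVec_uvec_mem {M : Matrix V V ℝ} (hM : M.PosDef) (S : Finset V) (v : V)
    (j : ↥S) : (M *ᵥ uvec M S v) ↑j = 0 := by
  have hinv : sub M S * (sub M S)⁻¹ = 1 :=
    Matrix.mul_nonsing_inv _ (isUnit_iff_ne_zero.mpr (posDef_sub hM S).det_pos.ne')
  rw [uvec_eq, mulVec_sub, Pi.sub_apply, mulVec_single', mulVec_ext]
  have : ∑ k : ↥S, M ↑j ↑k * ((sub M S)⁻¹ *ᵥ cvec M S v) k
      = (sub M S *ᵥ ((sub M S)⁻¹ *ᵥ cvec M S v)) j := rfl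
  rw [this, mulVec_mulVec, hinv, one_mulVec]
  simp [cvec]

lemma mulVec_uvec_v {M : Matrix V V ℝ} (hM : M.IsHermitian) (S : Finset V) (v : V) :
    (M *ᵥ uvec M S v) v = sval M S v := by
  rw [uvec_eq, mulVec_sub, Pi.sub_apply, mulVec_single', mulVec_ext, sval]
  congr 1
  simp only [dotProduct]
  refine Finset.sum_congr rfl fun k _ => ?_
  have : M v ↑k = M ↑k v := by
    have := hM.apply (↑k : V) v
    simpa using this
  rw [this]
  rfl

/-- key: for any vector of the form δ_v - ext X x with X ⊆ S,
its inner product with M *ᵥ uvec M S v equals sval M S v -/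
lemma dot_mulVec_uvec {M : Matrix V V ℝ} (hM : M.PosDef) {X S : Finset V}
    (hXS : X ⊆ S) (v : V) (x : ↥X → ℝ) :
    ((fun j => if j = v then (1:ℝ) else 0) - ext X x) ⬝ᵥ (M *ᵥ uvec M S v)
      = sval M S v := by
  rw [sub_dotProduct, dot_ext]
  have h1 : (fun j => if j = v then (1:ℝ) else 0) ⬝ᵥ (M *ᵥ uvec M S v)
      = (M *ᵥ uvec M S v) v := by
    simp [dotProduct]
  rw [h1, mulVec_uvec_v hM.1]
  have h2 : ∀ k : ↥X, x k * (M *ᵥ uvec M S v) ↑k = 0 := fun k => by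
    rw [show (M *ᵥ uvec M S v) ↑k = (M *ᵥ uvec M S v) ↑(⟨↑k, hXS k.2⟩ : ↥S) from rfl,
      mulVec_uvec_mem hM S v, mul_zero]
  rw [Finset.sum_congr rfl fun k _ => h2 k]
  simp

lemma dot_mulVec_symm {M : Matrix V V ℝ} (hM : M.IsHermitian) (u w : V → ℝ) :
    u ⬝ᵥ (M *ᵥ w) = w ⬝ᵥ (M *ᵥ u) := by
  simp only [dotProduct, mulVec, Finset.mul_sum]
  rw [Finset.sum_comm]
  refine Finset.sum_congr rfl fun i _ => Finset.sum_congr rfl fun j _ => ?_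
  have : M j i = M i j := by have := hM.apply i j; simpa using this
  rw [this]; ring

/-- monotonicity of the Schur complement value -/
lemma sval_mono {M : Matrix V V ℝ} (hM : M.PosDef) {X Y : Finset V}
    (hXY : X ⊆ Y) (v : V) : sval M Y v ≤ sval M X v := by
  set uX := uvec M X v
  set uY := uvec M Y v
  have hXX : uX ⬝ᵥ (M *ᵥ uX) = sval M X v := dot_mulVec_uvec hM (le_refl X) v _
  have hXY' : uX ⬝ᵥ (M *ᵥ uY) = sval M Y v := dot_mulVec_uvec hM hXY v _
  have hYY : uY ⬝ᵥ (M *ᵥ uY) = sval M Y v := dot_mulVec_uvec hM (le_refl Y) v _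
  have hYX : uY ⬝ᵥ (M *ᵥ uX) = sval M Y v := by
    rw [dot_mulVec_symm hM.1]; exact hXY'
  have hq : 0 ≤ (uX - uY) ⬝ᵥ (M *ᵥ (uX - uY)) := by
    rcases eq_or_ne (uX - uY) 0 with h | h
    · simp [h]
    · have := hM.dotProduct_mulVec_pos h
      simpa using this.le
  have expand : (uX - uY) ⬝ᵥ (M *ᵥ (uX - uY))
      = sval M X v - sval M Y v := by
    rw [sub_dotProduct, mulVec_sub, dotProduct_sub, dotProduct_sub,
      hXX, hXY', hYY, hYX]
    ring
  linarith [expand ▸ hq]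

/-- equivalence between ↥S ⊕ Unit and ↥(insert v S) when v ∉ S -/
def insEquiv (S : Finset V) (v : V) (hv : v ∉ S) : ↥S ⊕ Unit ≃ ↥(insert v S) where
  toFun := fun a => match a with
    | Sum.inl i => ⟨↑i, Finset.mem_insert_of_mem i.2⟩
    | Sum.inr _ => ⟨v, Finset.mem_insert_self v S⟩
  invFun := fun a => if h : (↑a : V) ∈ S then Sum.inl ⟨↑a, h⟩ else Sum.inr ()
  left_inv := fun a => by
    cases a with
    | inl i => simp [i.2]
    | inr u => simp [hv]
  right_inv := fun a => by
    by_cases h : (↑a : V) ∈ S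
    · simp [h]
    · have : (↑a : V) = v := by
        rcases Finset.mem_insert.mp a.2 with h' | h'
        · exact h'
        · exact absurd h' h
      simp only [h, dif_neg, not_false_iff]
      exact Subtype.ext this.symm

lemma det_sub_insert {M : Matrix V V ℝ} (hM : M.PosDef)
    (S : Finset V) (v : V) (hv : v ∉ S) :
    (sub M (insert v S)).det = (sub M S).det * sval M S v := by
  classical
  have hsubPD : (sub M S).PosDef := posDef_sub hM S
  have hdet : IsUnit (sub M S).det := isUnit_iff_ne_zero.mpr hsubPD.det_pos.ne'
  haveI : Invertible (sub M S) := (sub M S).invertibleOfIsUnitDet hdet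
  set e := insEquiv S v hv
  have h1 : (sub M (insert v S)).det = ((sub M (insert v S)).submatrix e e).det :=
    (Matrix.det_submatrix_equiv_self e _).symm
  have h2 : (sub M (insert v S)).submatrix e e
      = fromBlocks (sub M S) (Matrix.of fun i _ => M ↑i v) (Matrix.of fun _ j => M v ↑j)
          (Matrix.of fun _ _ => M v v) := by
    ext i j
    cases i <;> cases j <;> rfl
  rw [h1, h2, Matrix.det_fromBlocks₁₁]
  congr 1
  rw [Matrix.det_unique, Matrix.invOf_eq_nonsing_inv]
  show M v v - _ = sval M S v
  rw [sval]
  congr 1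
  simp only [Matrix.mul_apply, Matrix.of_apply, dotProduct, mulVec, Finset.sum_mul]
  rw [Finset.sum_comm]
  refine Finset.sum_congr rfl fun i _ => ?_
  rw [Finset.mul_sum]
  refine Finset.sum_congr rfl fun j _ => ?_
  have hsym : M v (↑i : V) = M ↑i v := by
    have := hM.1.apply (↑i : V) v; simpa using this
  rw [hsym]
  simp only [cvec]
  ring

/-- the positive definite case of the main theorem -/
lemma pd_ineq {M : Matrix V V ℝ} (hM : M.PosDef) (X Y : Finset V)
    (hXY : X ⊆ Y) (v : V) (hv : v ∉ Y) :
    (sub M (insert v Y)).det * (sub M X).det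
      ≤ (sub M (insert v X)).det * (sub M Y).det := by
  have hvX : v ∉ X := fun h => hv (hXY h)
  rw [det_sub_insert hM X v hvX, det_sub_insert hM Y v hv]
  have hdX : 0 < (sub M X).det := (posDef_sub hM X).det_pos
  have hdY : 0 < (sub M Y).det := (posDef_sub hM Y).det_pos
  have hs : sval M Y v ≤ sval M X v := sval_mono hM hXY v
  nlinarith [mul_le_mul_of_nonneg_left hs (mul_pos hdX hdY).le]

end KotelAux

/-- Submodularity of the log-determinant of principal submatrices of a positive
semidefinite matrix, in determinant form: for `X ⊆ Y` and `v ∉ Y`,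
`det L_{X∪{v}} · det L_Y ≥ det L_{Y∪{v}} · det L_X`. -/
theorem logdet_submodular_det_form
    {V : Type*} [Fintype V] [DecidableEq V]
    (L : Matrix V V ℝ) (hL : L.PosSemidef)
    (X Y : Finset V) (hXY : X ⊆ Y) (v : V) (hv : v ∉ Y) :
    (L.submatrix (fun a : ↥(insert v Y) => (a : V)) (fun a : ↥(insert v Y) => (a : V))).det
      * (L.submatrix (fun a : ↥X => (a : V)) (fun a : ↥X => (a : V))).det
    ≤ (L.submatrix (fun a : ↥(insert v X) => (a : V)) (fun a : ↥(insert v X) => (a : V))).det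
      * (L.submatrix (fun a : ↥Y => (a : V)) (fun a : ↥Y => (a : V))).det := by
  classical
  -- perturb to the positive definite case and take limits
  set g : ℝ → ℝ := fun t =>
    (KotelAux.sub (L + t • 1) (insert v Y)).det * (KotelAux.sub (L + t • 1) X).det with hg_def
  set f : ℝ → ℝ := fun t =>
    (KotelAux.sub (L + t • 1) (insert v X)).det * (KotelAux.sub (L + t • 1) Y).det with hf_def
  have hcontM : Continuous fun t : ℝ => L + t • (1 : Matrix V V ℝ) :=
    continuous_const.add (continuous_id.smul continuous_const)
  have hcd : ∀ S : Finset V, Continuous fun t : ℝ => (KotelAux.sub (L + t • 1) S).det := by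
    intro S
    exact (hcontM.matrix_submatrix _ _).matrix_det
  have hf : Continuous f := ((hcd (insert v X)).mul (hcd Y))
  have hg : Continuous g := ((hcd (insert v Y)).mul (hcd X))
  have key : ∀ t : ℝ, 0 < t → g t ≤ f t := by
    intro t ht
    have hone : (t • (1 : Matrix V V ℝ)) = Matrix.diagonal (fun _ => t) :=
      Matrix.smul_one_eq_diagonal t
    have hpd : (t • (1 : Matrix V V ℝ)).PosDef := by
      rw [hone]
      exact Matrix.posDef_diagonal_iff.mpr fun _ => ht
    have hMpd : (L + t • (1 : Matrix V V ℝ)).PosDef := Matrix.PosDef.posSemidef_add hL hpd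
    exact KotelAux.pd_ineq hMpd X Y hXY v hv
  have hfz : f 0 = (L.submatrix (fun a : ↥(insert v X) => (a : V))
      (fun a : ↥(insert v X) => (a : V))).det
      * (L.submatrix (fun a : ↥Y => (a : V)) (fun a : ↥Y => (a : V))).det := by
    simp [hf_def, KotelAux.sub]
  have hgz : g 0 = (L.submatrix (fun a : ↥(insert v Y) => (a : V))
      (fun a : ↥(insert v Y) => (a : V))).det
      * (L.submatrix (fun a : ↥X => (a : V)) (fun a : ↥X => (a : V))).det := by
    simp [hg_def, KotelAux.sub]
  rw [← hfz, ← hgz]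
  have htf : Filter.Tendsto f (nhdsWithin 0 (Set.Ioi 0)) (nhds (f 0)) :=
    (hf.tendsto 0).mono_left nhdsWithin_le_nhds
  have htg : Filter.Tendsto g (nhdsWithin 0 (Set.Ioi 0)) (nhds (g 0)) :=
    (hg.tendsto 0).mono_left nhdsWithin_le_nhds
  exact le_of_tendsto_of_tendsto htg htf
    (Filter.eventually_of_mem self_mem_nhdsWithin fun t ht => key t ht)
end

section
/- Let L ∈ ℝ^{V×V} be a positive semidefinite matrix on a finite set V of size n with a factorization L = C Cᵀ, where C ∈ ℝ^{V×[n]}. Let S ⊆ V with |S| = j, set T = V \ S and J = [j] = {1,…,j}, and suppose that C_{vl} = 0 for all v ∈ S and all l > j (the rows of C indexed by S are supported on the first j columns) and that the j×j matrix C_{SJ} is invertible. Then L_{SS} = C_{SJ} C_{SJ}ᵀ is invertible, and for all u, v ∈ T the Schur complement satisfies (L_{TT} − L_{TS} L_{SS}^{-1} L_{ST})_{uv} = L_{uv} − ⟨C_{uJ}, C_{vJ}⟩, where ⟨·,·⟩ is the standard inner product of the row vectors C_{uJ}, C_{vJ} ∈ ℝ^J. -/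
open Matrix BigOperators

/-- If `L = C Cᵀ`, the rows of `C` indexed by `S` are supported on the first `j` columns,
and `C_{SJ}` is invertible, then `L_{SS} = C_{SJ} C_{SJ}ᵀ` is invertible and every entry of
the Schur complement of `S` in `L` satisfies
`(L_{TT} − L_{TS} L_{SS}⁻¹ L_{ST})_{uv} = L_{uv} − ⟨C_{uJ}, C_{vJ}⟩`. -/
theorem schur_complement_entry_via_cholesky_factor
    {V : Type*} [Fintype V] [DecidableEq V]
    (n : ℕ) (hn : Fintype.card V = n)
    (L : Matrix V V ℝ) (C : Matrix V (Fin n) ℝ)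
    (hLC : L = C * Cᵀ)
    (S : Finset V) (j : ℕ) (hS : S.card = j)
    (hsupp : ∀ v ∈ S, ∀ l : Fin n, j ≤ (l : ℕ) → C v l = 0)
    (hinv : ∃ B : Matrix {l : Fin n // (l : ℕ) < j} ↥S ℝ,
      C.submatrix (fun a : ↥S => (a : V)) (fun l : {l : Fin n // (l : ℕ) < j} => (l : Fin n)) * B = 1
      ∧ B * C.submatrix (fun a : ↥S => (a : V)) (fun l : {l : Fin n // (l : ℕ) < j} => (l : Fin n)) = 1) :
    (L.submatrix (fun a : ↥S => (a : V)) (fun a : ↥S => (a : V))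
        = C.submatrix (fun a : ↥S => (a : V)) (fun l : {l : Fin n // (l : ℕ) < j} => (l : Fin n))
          * (C.submatrix (fun a : ↥S => (a : V)) (fun l : {l : Fin n // (l : ℕ) < j} => (l : Fin n)))ᵀ
      ∧ IsUnit (L.submatrix (fun a : ↥S => (a : V)) (fun a : ↥S => (a : V))).det)
    ∧ ∀ (u v : V) (hu : u ∉ S) (hv : v ∉ S),
        schurCompl L S ⟨u, Finset.mem_compl.mpr hu⟩ ⟨v, Finset.mem_compl.mpr hv⟩
          = L u v - ∑ l : {l : Fin n // (l : ℕ) < j}, C u l * C v l := by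
  classical
  obtain ⟨B, hB1, hB2⟩ := hinv
  set D := C.submatrix (fun a : ↥S => (a : V)) (fun l : {l : Fin n // (l : ℕ) < j} => (l : Fin n))
    with hDdef
  set E := C.submatrix (fun a : ↥Sᶜ => (a : V)) (fun l : {l : Fin n // (l : ℕ) < j} => (l : Fin n))
    with hEdef
  have hDB : Dᵀ * Bᵀ = 1 := by
    rw [← Matrix.transpose_mul, hB2, Matrix.transpose_one]
  have hBD : Bᵀ * Dᵀ = 1 := by
    rw [← Matrix.transpose_mul, hB1, Matrix.transpose_one]
  have hM1 : (D * Dᵀ) * (Bᵀ * B) = 1 := by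
    calc (D * Dᵀ) * (Bᵀ * B) = D * (Dᵀ * Bᵀ) * B := by simp only [Matrix.mul_assoc]
      _ = 1 := by rw [hDB, Matrix.mul_one, hB1]
  have hM2 : (Bᵀ * B) * (D * Dᵀ) = 1 := by
    calc (Bᵀ * B) * (D * Dᵀ) = Bᵀ * (B * D) * Dᵀ := by simp only [Matrix.mul_assoc]
      _ = 1 := by rw [hB2, Matrix.mul_one, hBD]
  have hMinv : Invertible (D * Dᵀ) := ⟨Bᵀ * B, hM2, hM1⟩
  have hinvSS : (D * Dᵀ)⁻¹ = Bᵀ * B := Matrix.inv_eq_right_inv hM1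
  -- key sum identity when the second index is in S
  have key : ∀ (x y : V), y ∈ S →
      L x y = ∑ l : {l : Fin n // (l : ℕ) < j}, C x l * C y l := by
    intro x y hy
    rw [hLC, Matrix.mul_apply]
    rw [← Fintype.sum_subtype_add_sum_subtype (fun l : Fin n => (l : ℕ) < j)
      (fun l => C x l * Cᵀ l y)]
    have h0 : ∑ l : {l : Fin n // ¬ (l : ℕ) < j}, C x l * Cᵀ (l : Fin n) y = 0 := by
      apply Finset.sum_eq_zero
      intro l _
      have : C y (l : Fin n) = 0 := hsupp y hy l (le_of_not_gt l.2)
      simp [Matrix.transpose_apply, this]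
    rw [h0, add_zero]
    simp [Matrix.transpose_apply]
  have key' : ∀ (x y : V), x ∈ S →
      L x y = ∑ l : {l : Fin n // (l : ℕ) < j}, C x l * C y l := by
    intro x y hx
    have : L x y = L y x := by
      rw [hLC]
      simp [Matrix.mul_apply, Matrix.transpose_apply, mul_comm]
    rw [this, key y x hx]
    exact Finset.sum_congr rfl (fun l _ => mul_comm _ _)
  -- L_SS = D * Dᵀ
  have hSS : L.submatrix (fun a : ↥S => (a : V)) (fun a : ↥S => (a : V)) = D * Dᵀ := by
    ext a b
    rw [Matrix.submatrix_apply, Matrix.mul_apply, key a b b.2]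
    simp [hDdef, Matrix.transpose_apply]
  have hdetSS : IsUnit (L.submatrix (fun a : ↥S => (a : V)) (fun a : ↥S => (a : V))).det := by
    rw [hSS]
    exact (D * Dᵀ).isUnit_det_of_invertible
  refine ⟨⟨hSS, hdetSS⟩, ?_⟩
  -- off-diagonal blocks
  have hTS : L.submatrix (fun a : ↥Sᶜ => (a : V)) (fun a : ↥S => (a : V)) = E * Dᵀ := by
    ext a b
    rw [Matrix.submatrix_apply, Matrix.mul_apply, key a b b.2]
    simp [hDdef, hEdef, Matrix.transpose_apply]
  have hST : L.submatrix (fun a : ↥S => (a : V)) (fun a : ↥Sᶜ => (a : V)) = D * Eᵀ := by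
    ext a b
    rw [Matrix.submatrix_apply, Matrix.mul_apply, key' a b a.2]
    simp [hDdef, hEdef, Matrix.transpose_apply]
  have hprod : L.submatrix (fun a : ↥Sᶜ => (a : V)) (fun a : ↥S => (a : V))
      * (L.submatrix (fun a : ↥S => (a : V)) (fun a : ↥S => (a : V)))⁻¹
      * L.submatrix (fun a : ↥S => (a : V)) (fun a : ↥Sᶜ => (a : V)) = E * Eᵀ := by
    rw [hTS, hST, hSS, hinvSS]
    calc E * Dᵀ * (Bᵀ * B) * (D * Eᵀ)
        = E * ((Dᵀ * Bᵀ) * (B * D)) * Eᵀ := by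
          simp only [Matrix.mul_assoc]
      _ = E * Eᵀ := by rw [hDB, hB2, Matrix.one_mul, Matrix.mul_one]
  intro u v hu hv
  have := congrFun (congrFun hprod ⟨u, Finset.mem_compl.mpr hu⟩) ⟨v, Finset.mem_compl.mpr hv⟩
  rw [schurCompl, Matrix.sub_apply, this, Matrix.mul_apply]
  simp [hEdef, Matrix.transpose_apply]
end

section
/- Let L be an n×n graph Laplacian matrix and suppose L = G Gᵀ, where G is an n×n lower triangular matrix such that G_{jj} > 0 for j ∈ [k] and all columns of G with index l > k are zero. Then every strictly lower off-diagonal entry in the first k columns of G is nonpositive: G_{ij} ≤ 0 for all j ∈ [k] and all i > j. -/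
open Matrix BigOperators

/-! Induct over the columns of `G`. Entry `(i, j)` of `G Gᵀ` with `j < i` is
`G i j * G j j + ∑_{x < j} G i x * G j x`; by induction the entries in earlier columns are
nonpositive, so the sum is nonnegative, and `(G Gᵀ) i j = L i j ≤ 0` with `G j j > 0`
forces `G i j ≤ 0`. -/

namespace Matrix

variable {ι R : Type*} [Fintype ι] [LinearOrder ι] [Ring R] [LinearOrder R]
  [IsStrictOrderedRing R]

theorem mul_diag_le_mul_transpose_apply_of_lower {G : Matrix ι ι R}
    (hlower : ∀ a b, a < b → G a b = 0) {i j : ι}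
    (hi : ∀ x < j, G i x ≤ 0) (hj : ∀ x < j, G j x ≤ 0) :
    G i j * G j j ≤ (G * Gᵀ) i j := by
  have hrest : 0 ≤ ∑ x ∈ Finset.univ.erase j, G i x * G j x := by
    refine Finset.sum_nonneg fun x hx => ?_
    rcases lt_trichotomy x j with hxj | rfl | hjx
    · exact mul_nonneg_of_nonpos_of_nonpos (hi x hxj) (hj x hxj)
    · exact absurd rfl (Finset.ne_of_mem_erase hx)
    · simp [hlower j x hjx]
  calc G i j * G j j
      ≤ G i j * G j j + ∑ x ∈ Finset.univ.erase j, G i x * G j x :=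
        le_add_of_nonneg_right hrest
    _ = (G * Gᵀ) i j := by
      rw [Finset.add_sum_erase _ (fun x => G i x * G j x) (Finset.mem_univ j)]
      simp only [mul_apply, transpose_apply]

theorem lower_apply_nonpos_of_mul_transpose_offDiag_nonpos {G : Matrix ι ι R}
    (hlower : ∀ a b, a < b → G a b = 0) (hoff : ∀ a b, a ≠ b → (G * Gᵀ) a b ≤ 0)
    {j : ι} (hpos : ∀ x ≤ j, 0 < G x x) {i : ι} (hji : j < i) : G i j ≤ 0 := by
  induction j using WellFoundedLT.induction generalizing i with
  | ind j ih =>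
    have hprev {a : ι} (ha : j ≤ a) (x : ι) (hxj : x < j) : G a x ≤ 0 :=
      ih x hxj (fun y hy => hpos y (hy.trans hxj.le)) (hxj.trans_le ha)
    have hle := mul_diag_le_mul_transpose_apply_of_lower hlower
      (hprev hji.le) (hprev le_rfl)
    exact nonpos_of_mul_nonpos_left (hle.trans (hoff i j hji.ne'))
      (hpos j le_rfl)

end Matrix

theorem cholesky_factor_of_laplacian_offdiag_nonpos_general
    {n : ℕ} (L G : Matrix (Fin n) (Fin n) ℝ)
    (hoff : ∀ u v : Fin n, u ≠ v → L u v ≤ 0)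
    (hLG : L = G * Gᵀ)
    (hlower : ∀ i j : Fin n, i < j → G i j = 0)
    (k : ℕ)
    (hdiagpos : ∀ j : Fin n, (j : ℕ) < k → 0 < G j j) :
    ∀ i j : Fin n, (j : ℕ) < k → j < i → G i j ≤ 0 := by
  subst hLG
  intro i j hjk hji
  exact lower_apply_nonpos_of_mul_transpose_offDiag_nonpos hlower hoff
    (fun x hxj => hdiagpos x (lt_of_le_of_lt (Fin.le_iff_val_le_val.mp hxj) hjk)) hji

/-- If a graph Laplacian matrix factors as `L = G Gᵀ` with `G` lower triangular, positive
diagonal entries in the first `k` columns, and zero columns beyond the `k`-th, then all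
strictly lower off-diagonal entries in the first `k` columns of `G` are nonpositive. -/
theorem cholesky_factor_of_laplacian_offdiag_nonpos
    {n : ℕ} (L G : Matrix (Fin n) (Fin n) ℝ)
    (hsym : L.IsSymm)
    (hoff : ∀ u v : Fin n, u ≠ v → L u v ≤ 0)
    (hdiag : ∀ v : Fin n, L v v = -∑ u ∈ Finset.univ.erase v, L u v)
    (hLG : L = G * Gᵀ)
    (hlower : ∀ i j : Fin n, i < j → G i j = 0)
    (k : ℕ)
    (hdiagpos : ∀ j : Fin n, (j : ℕ) < k → 0 < G j j)
    (hzerocols : ∀ i l : Fin n, k ≤ (l : ℕ) → G i l = 0) :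
    ∀ i j : Fin n, (j : ℕ) < k → j < i → G i j ≤ 0 :=
  cholesky_factor_of_laplacian_offdiag_nonpos_general L G hoff hLG hlower k hdiagpos
end

section
/- Let L ∈ ℝ^{V×V} be a graph Laplacian matrix on a finite set V of size n with a factorization L = C Cᵀ, where C ∈ ℝ^{V×[n]}. Let S ⊆ V with |S| = j, set T = V \ S and J = [j], and suppose C_{vl} = 0 for all v ∈ S and l > j, and that C_{SJ} is invertible. Then for every v ∈ T, writing T' = T \ {v}, the (v,v) diagonal entry of the Schur complement satisfies (L_{TT} − L_{TS} L_{SS}^{-1} L_{ST})_{vv} = ⟨Σ_{u∈T'} C_{uJ}, C_{vJ}⟩ − Σ_{u∈T'} L_{uv}. -/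
/-!
Split the columns of `C` into `J` and its complement: `C Cᵀ = P Pᵀ + Q Qᵀ` with `P = C_{·J}` and
`Q = C_{·Jᶜ}`. Since `Q` vanishes on the rows of `S` and `P_S = C_{SJ}` is invertible, the Schur
complement of `S` is exactly `Q_T Q_Tᵀ`, so its `(v, v)` entry is `∑_{l ∉ J} C_{vl}²`.

For the other side, let `s = Cᵀ 𝟙` be the vector of column sums of `C`. Zero column sums of `L`
say `C s = 0`; on the rows of `S` this reads `C_{SJ} s_J = 0`, so `s_J = 0` and therefore
`∑_{l ∉ J} C_{vl} s_l = (C s)_v = 0`. As `s_l = C_{vl} + ∑_{u ∈ T'} C_{ul}` for `l ∉ J`, this is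
the claimed identity.
-/

open Matrix BigOperators

theorem Fintype.sum_subtype_eq_sum_of_eq_zero {ι M : Type*} [Fintype ι] [AddCommMonoid M]
    (p : ι → Prop) [DecidablePred p] {f : ι → M} (hf : ∀ l, ¬p l → f l = 0) :
    ∑ l : {l // p l}, f l = ∑ l, f l := by
  have h : ∑ l : {l // ¬p l}, f l = 0 := Finset.sum_eq_zero fun l _ => hf l l.2
  rw [← Fintype.sum_subtype_add_sum_subtype p f, h, add_zero]

namespace Matrix

variable {R : Type*} [CommRing R]

theorem inv_mul_transpose_eq_of_mul_eq_one {m k : Type*} [Fintype m] [DecidableEq m] [Fintype k]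
    [DecidableEq k] {A : Matrix m k R} {B : Matrix k m R} (hAB : A * B = 1) (hBA : B * A = 1) :
    (A * Aᵀ)⁻¹ = Bᵀ * B := by
  apply inv_eq_left_inv
  rw [Matrix.mul_assoc, ← Matrix.mul_assoc B, hBA, Matrix.one_mul, ← transpose_mul, hAB,
    transpose_one]

theorem submatrix_add_mul_transpose_self {V J K α β : Type*} [Fintype J] [Fintype K]
    (P : Matrix V J R) (Q : Matrix V K R) (r : α → V) (c : β → V) :
    (P * Pᵀ + Q * Qᵀ).submatrix r c
      = P.submatrix r id * (P.submatrix c id)ᵀ + Q.submatrix r id * (Q.submatrix c id)ᵀ :=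
  rfl

theorem mul_transpose_self_eq_add {V ι : Type*} [Fintype ι] (C : Matrix V ι R)
    (p : ι → Prop) [DecidablePred p] :
    C * Cᵀ = C.submatrix id (Subtype.val : {l // p l} → ι)
        * (C.submatrix id (Subtype.val : {l // p l} → ι))ᵀ
      + C.submatrix id (Subtype.val : {l // ¬p l} → ι)
        * (C.submatrix id (Subtype.val : {l // ¬p l} → ι))ᵀ := by
  ext u w
  exact (Fintype.sum_subtype_add_sum_subtype p _).symm

theorem sum_apply_eq_zero_of_diag_eq_neg_sum {V : Type*} [Fintype V] [DecidableEq V]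
    {L : Matrix V V R} (hdiag : ∀ v, L v v = -∑ u ∈ Finset.univ.erase v, L u v) (v : V) :
    ∑ u, L u v = 0 := by
  rw [← Finset.add_sum_erase _ _ (Finset.mem_univ v), hdiag, neg_add_cancel]

theorem mulVec_sum_rows_eq_zero {V ι : Type*} [Fintype V] [Fintype ι] {C : Matrix V ι R}
    (hcol : ∀ v, ∑ u, (C * Cᵀ) u v = 0) : C *ᵥ (fun l => ∑ u, C u l) = 0 := by
  funext v
  simp only [mulVec, dotProduct, Finset.mul_sum, Pi.zero_apply]
  rw [Finset.sum_comm, ← hcol v]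
  simp only [mul_apply, transpose_apply, mul_comm]

theorem apply_eq_zero_of_mulVec_eq_zero_of_rows_supported {V ι : Type*} [Fintype ι] [DecidableEq ι]
    {C : Matrix V ι R} {S : Finset V} {p : ι → Prop} [DecidablePred p]
    (hsupp : ∀ v ∈ S, ∀ l, ¬p l → C v l = 0)
    {B : Matrix {l // p l} S R} (hBA : B * C.submatrix ((↑) : S → V) ((↑) : {l // p l} → ι) = 1)
    {x : ι → R} (hx : C *ᵥ x = 0) (l : ι) (hl : p l) : x l = 0 := by
  set A := C.submatrix ((↑) : S → V) ((↑) : {l // p l} → ι)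
  have hAx : A *ᵥ (fun l => x l) = 0 := by
    funext a
    have h := congrFun hx a
    simp only [Pi.zero_apply] at h ⊢
    rw [← h]
    exact Fintype.sum_subtype_eq_sum_of_eq_zero p (f := fun l => C a l * x l) fun l hl => by
      rw [hsupp a a.2 l hl, zero_mul]
  have hx' : (fun l : {l // p l} => x l) = 0 := by
    rw [← one_mulVec (fun l : {l // p l} => x l), ← hBA, ← mulVec_mulVec, hAx, mulVec_zero]
  exact congrFun hx' ⟨l, hl⟩

theorem sum_not_mul_self_eq_sum_mul_sub_sum_mul_transpose_apply {V ι : Type*} [Fintype V]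
    [DecidableEq V] [Fintype ι] {C : Matrix V ι R} {S : Finset V} {p : ι → Prop} [DecidablePred p]
    (hsupp : ∀ v ∈ S, ∀ l, ¬p l → C v l = 0) (hCs : C *ᵥ (fun l => ∑ u, C u l) = 0)
    (hsJ : ∀ l, p l → ∑ u, C u l = 0) {v : V} (hv : v ∉ S) :
    ∑ l : {l // ¬p l}, C v l * C v l
      = ∑ l : {l // p l}, (∑ u ∈ Sᶜ.erase v, C u l) * C v l - ∑ u ∈ Sᶜ.erase v, (C * Cᵀ) u v := by
  have hrow : ∑ u ∈ Sᶜ.erase v, (C * Cᵀ) u v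
      = ∑ l : {l // p l}, (∑ u ∈ Sᶜ.erase v, C u l) * C v l
        + ∑ l : {l // ¬p l}, (∑ u ∈ Sᶜ.erase v, C u l) * C v l := by
    simp only [mul_apply, transpose_apply, Finset.sum_mul]
    rw [Finset.sum_comm]
    exact (Fintype.sum_subtype_add_sum_subtype p fun l => ∑ u ∈ Sᶜ.erase v, C u l * C v l).symm
  have hcol : ∀ l, ¬p l → ∑ u ∈ Sᶜ.erase v, C u l + C v l = ∑ u, C u l := fun l hl => by
    rw [Finset.sum_erase_add _ _ (Finset.mem_compl.2 hv),
      ← Finset.sum_compl_add_sum S fun u => C u l, Finset.sum_eq_zero fun u hu => hsupp u hu l hl,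
      add_zero]
  have hcompl : ∑ l : {l // ¬p l}, C v l * ∑ u, C u l = 0 := by
    rw [Fintype.sum_subtype_eq_sum_of_eq_zero _ (f := fun l => C v l * ∑ u, C u l) fun l hl => by
      rw [hsJ l (not_not.1 hl), mul_zero]]
    exact congrFun hCs v
  rw [hrow, sub_add_cancel_left, eq_neg_iff_add_eq_zero, ← Finset.sum_add_distrib, ← hcompl]
  refine Finset.sum_congr rfl fun l _ => ?_
  rw [← hcol l l.2]
  ring

end Matrix

theorem schurCompl_add_mul_transpose_self {V J K : Type*} [Fintype V] [DecidableEq V] [Fintype J]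
    [DecidableEq J] [Fintype K] (P : Matrix V J ℝ) (Q : Matrix V K ℝ) (S : Finset V)
    (hQ : ∀ v ∈ S, Q v = 0) (B : Matrix J S ℝ)
    (hPB : P.submatrix (fun a : ↥S => (a : V)) id * B = 1)
    (hBP : B * P.submatrix (fun a : ↥S => (a : V)) id = 1) :
    schurCompl (P * Pᵀ + Q * Qᵀ) S
      = Q.submatrix (fun a : ↥Sᶜ => (a : V)) id * (Q.submatrix (fun a : ↥Sᶜ => (a : V)) id)ᵀ := by
  have hQS : Q.submatrix ((↑) : S → V) id = 0 := by
    ext a l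
    simp [hQ a a.2]
  unfold schurCompl
  simp only [submatrix_add_mul_transpose_self, hQS, transpose_zero, Matrix.zero_mul,
    Matrix.mul_zero, add_zero, inv_mul_transpose_eq_of_mul_eq_one hPB hBP]
  set A := P.submatrix ((↑) : S → V) id
  set PT := P.submatrix (fun a : ↥Sᶜ => (a : V)) id
  have hcancel : PT * Aᵀ * (Bᵀ * B) * (A * PTᵀ) = PT * PTᵀ :=
    calc _ = PT * (B * A)ᵀ * (B * A) * PTᵀ := by simp only [transpose_mul, Matrix.mul_assoc]
      _ = _ := by rw [hBP, transpose_one, Matrix.mul_one, Matrix.mul_one]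
  rw [hcancel, add_sub_cancel_left]

theorem schurCompl_mul_transpose_self_of_rows_supported {V ι : Type*} [Fintype V] [DecidableEq V]
    [Fintype ι] [DecidableEq ι] (C : Matrix V ι ℝ) (S : Finset V) {p : ι → Prop} [DecidablePred p]
    (hsupp : ∀ v ∈ S, ∀ l, ¬p l → C v l = 0) (B : Matrix {l // p l} S ℝ)
    (hAB : C.submatrix (fun a : ↥S => (a : V)) (Subtype.val : {l // p l} → ι) * B = 1)
    (hBA : B * C.submatrix (fun a : ↥S => (a : V)) (Subtype.val : {l // p l} → ι) = 1) :
    schurCompl (C * Cᵀ) S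
      = C.submatrix (fun a : ↥Sᶜ => (a : V)) (Subtype.val : {l // ¬p l} → ι)
        * (C.submatrix (fun a : ↥Sᶜ => (a : V)) (Subtype.val : {l // ¬p l} → ι))ᵀ := by
  rw [mul_transpose_self_eq_add C p]
  exact schurCompl_add_mul_transpose_self _ _ S (fun u hu => funext fun l => hsupp u hu l.1 l.2)
    B hAB hBA

theorem schur_complement_diag_stable_formula_general
    {V : Type*} [Fintype V] [DecidableEq V]
    (n : ℕ)
    (L : Matrix V V ℝ)
    (hdiag : ∀ v : V, L v v = -∑ u ∈ Finset.univ.erase v, L u v)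
    (C : Matrix V (Fin n) ℝ)
    (hLC : L = C * Cᵀ)
    (S : Finset V) (j : ℕ)
    (hsupp : ∀ v ∈ S, ∀ l : Fin n, j ≤ (l : ℕ) → C v l = 0)
    (hinv : ∃ B : Matrix {l : Fin n // (l : ℕ) < j} ↥S ℝ,
      C.submatrix (fun a : ↥S => (a : V)) (fun l : {l : Fin n // (l : ℕ) < j} => (l : Fin n)) * B = 1
      ∧ B * C.submatrix (fun a : ↥S => (a : V)) (fun l : {l : Fin n // (l : ℕ) < j} => (l : Fin n)) = 1) :
    ∀ (v : V) (hv : v ∉ S),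
      schurCompl L S ⟨v, Finset.mem_compl.mpr hv⟩ ⟨v, Finset.mem_compl.mpr hv⟩
        = (∑ l : {l : Fin n // (l : ℕ) < j}, (∑ u ∈ Sᶜ.erase v, C u l) * C v l)
          - ∑ u ∈ Sᶜ.erase v, L u v := by
  intro v hv
  obtain ⟨B, hAB, hBA⟩ := hinv
  have hsupp' : ∀ u ∈ S, ∀ l : Fin n, ¬(l : ℕ) < j → C u l = 0 :=
    fun u hu l hl => hsupp u hu l (not_lt.1 hl)
  have hCs : C *ᵥ (fun l => ∑ u, C u l) = 0 :=
    mulVec_sum_rows_eq_zero (hLC ▸ sum_apply_eq_zero_of_diag_eq_neg_sum hdiag)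
  have hsJ : ∀ l : Fin n, (l : ℕ) < j → ∑ u, C u l = 0 :=
    apply_eq_zero_of_mulVec_eq_zero_of_rows_supported hsupp' hBA hCs
  subst hLC
  rw [schurCompl_mul_transpose_self_of_rows_supported C S hsupp' B hAB hBA]
  exact sum_not_mul_self_eq_sum_mul_sub_sum_mul_transpose_apply hsupp' hCs hsJ hv

/-- For a graph Laplacian `L = C Cᵀ` whose rows indexed by `S` are supported on the first
`j` columns and with `C_{SJ}` invertible, the diagonal entry of the Schur complement at
`v ∉ S` equals `⟨∑_{u ∈ T'} C_{uJ}, C_{vJ}⟩ − ∑_{u ∈ T'} L_{uv}` where `T' = (V \ S) \ {v}`. -/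
theorem schur_complement_diag_stable_formula
    {V : Type*} [Fintype V] [DecidableEq V]
    (n : ℕ) (hn : Fintype.card V = n)
    (L : Matrix V V ℝ)
    (hsym : L.IsSymm)
    (hoff : ∀ u v : V, u ≠ v → L u v ≤ 0)
    (hdiag : ∀ v : V, L v v = -∑ u ∈ Finset.univ.erase v, L u v)
    (C : Matrix V (Fin n) ℝ)
    (hLC : L = C * Cᵀ)
    (S : Finset V) (j : ℕ) (hS : S.card = j)
    (hsupp : ∀ v ∈ S, ∀ l : Fin n, j ≤ (l : ℕ) → C v l = 0)
    (hinv : ∃ B : Matrix {l : Fin n // (l : ℕ) < j} ↥S ℝ,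
      C.submatrix (fun a : ↥S => (a : V)) (fun l : {l : Fin n // (l : ℕ) < j} => (l : Fin n)) * B = 1
      ∧ B * C.submatrix (fun a : ↥S => (a : V)) (fun l : {l : Fin n // (l : ℕ) < j} => (l : Fin n)) = 1) :
    ∀ (v : V) (hv : v ∉ S),
      schurCompl L S ⟨v, Finset.mem_compl.mpr hv⟩ ⟨v, Finset.mem_compl.mpr hv⟩
        = (∑ l : {l : Fin n // (l : ℕ) < j}, (∑ u ∈ Sᶜ.erase v, C u l) * C v l)
          - ∑ u ∈ Sᶜ.erase v, L u v :=
  schur_complement_diag_stable_formula_general n L hdiag C hLC S j hsupp hinv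
end

section
/- Let 0 ≤ e < 1 and 0 ≤ r ≤ (1−e)/(1+e), and define f_r(p, q) = (p/(1+p) + (q/(1+q))·r) / (1/(1+p) − (1/(1+q))·r) on the domain D = {(p,q) : −e ≤ p ≤ e, −e ≤ q ≤ e, 1/(1+p) > r/(1+q)}. Then f_r is monotone nondecreasing in each variable separately on D: if (p,q), (p',q) ∈ D with p ≤ p' then f_r(p,q) ≤ f_r(p',q), and if (p,q), (p,q') ∈ D with q ≤ q' then f_r(p,q) ≤ f_r(p,q'). In particular, for all (p,q) ∈ D, −((1+r)/(1−r))·e = f_r(−e,−e) ≤ f_r(p,q) ≤ f_r(e,e) = ((1+r)/(1−r))·e. -/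
/-- The function `f_r(p,q)` from the error analysis of relaxed subtraction. -/
noncomputable def fr (r p q : ℝ) : ℝ :=
  (p / (1 + p) + (q / (1 + q)) * r) / (1 / (1 + p) - (1 / (1 + q)) * r)

/-- The domain of `f_r`: `-e ≤ p, q ≤ e` and `1/(1+p) > r/(1+q)`. -/
def frDom (e r p q : ℝ) : Prop :=
  -e ≤ p ∧ p ≤ e ∧ -e ≤ q ∧ q ≤ e ∧ 1 / (1 + p) > r / (1 + q)

private lemma fr_mono_p (r p p' q : ℝ) (hr0 : 0 ≤ r)
    (hp : 0 < 1 + p) (hp' : 0 < 1 + p') (hq : 0 < 1 + q)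
    (hd : r / (1 + q) < 1 / (1 + p)) (hd' : r / (1 + q) < 1 / (1 + p'))
    (hkey : r * (1 - q) ≤ 1 + q) (hpp : p ≤ p') :
    fr r p q ≤ fr r p' q := by
  unfold fr
  have hD : 0 < 1 / (1 + p) - (1 / (1 + q)) * r := by
    have h : (1 / (1 + q)) * r = r / (1 + q) := by ring
    rw [h]; linarith
  have hD' : 0 < 1 / (1 + p') - (1 / (1 + q)) * r := by
    have h : (1 / (1 + q)) * r = r / (1 + q) := by ring
    rw [h]; linarith
  rw [div_le_div_iff₀ hD hD']
  have h1 : 0 ≤ (p' - p) * ((1 + q) * ((1 + q) - r * (1 - q))) := by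
    apply mul_nonneg (by linarith)
    apply mul_nonneg (by linarith) (by linarith)
  field_simp
  nlinarith [mul_pos hp hq, mul_pos hp' hq, mul_pos hp hp', sq_nonneg (1+q),
    mul_nonneg h1 (mul_pos hp hp').le, mul_nonneg h1 hq.le]

private lemma fr_mono_q (r p q q' : ℝ) (hr0 : 0 ≤ r)
    (hp : 0 < 1 + p) (hq : 0 < 1 + q) (hq' : 0 < 1 + q')
    (hd : r / (1 + q) < 1 / (1 + p)) (hd' : r / (1 + q') < 1 / (1 + p))
    (hkey : r * (1 + p) ≤ 1 - p) (hqq : q ≤ q') :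
    fr r p q ≤ fr r p q' := by
  unfold fr
  have hD : 0 < 1 / (1 + p) - (1 / (1 + q)) * r := by
    have h : (1 / (1 + q)) * r = r / (1 + q) := by ring
    rw [h]; linarith
  have hD' : 0 < 1 / (1 + p) - (1 / (1 + q')) * r := by
    have h : (1 / (1 + q')) * r = r / (1 + q') := by ring
    rw [h]; linarith
  rw [div_le_div_iff₀ hD hD']
  have h1 : 0 ≤ (q' - q) * ((1 + p) * (r * ((1 - p) - (1 + p) * r))) := by
    apply mul_nonneg (by linarith)
    apply mul_nonneg (by linarith)
    apply mul_nonneg hr0 (by nlinarith)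
  field_simp
  nlinarith [mul_pos hq hq', mul_pos hp hq, mul_pos hp hq', sq_nonneg (1+p),
    mul_nonneg h1 (mul_pos hq hq').le, mul_nonneg h1 hp.le]

/-- For `0 ≤ e < 1` and `0 ≤ r ≤ (1−e)/(1+e)`, the function `f_r` is monotone
nondecreasing in each variable separately on its domain; in particular it is bounded
below and above by `f_r(−e,−e) = −((1+r)/(1−r))·e` and `f_r(e,e) = ((1+r)/(1−r))·e`. -/
theorem fr_monotone_and_bounds
    (e r : ℝ) (he0 : 0 ≤ e) (he1 : e < 1)
    (hr0 : 0 ≤ r) (hr1 : r ≤ (1 - e) / (1 + e)) :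
    (∀ p p' q : ℝ, frDom e r p q → frDom e r p' q → p ≤ p' → fr r p q ≤ fr r p' q)
    ∧ (∀ p q q' : ℝ, frDom e r p q → frDom e r p q' → q ≤ q' → fr r p q ≤ fr r p q')
    ∧ (∀ p q : ℝ, frDom e r p q → fr r (-e) (-e) ≤ fr r p q ∧ fr r p q ≤ fr r e e)
    ∧ fr r (-e) (-e) = -((1 + r) / (1 - r)) * e
    ∧ fr r e e = ((1 + r) / (1 - r)) * e := by
  have hep : (0:ℝ) < 1 + e := by linarith
  have hem : (0:ℝ) < 1 - e := by linarith
  have hre : r * (1 + e) ≤ 1 - e := (le_div_iff₀ hep).mp hr1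
  -- in-domain positivity facts
  have hpos : ∀ x : ℝ, -e ≤ x → 0 < 1 + x := fun x hx => by linarith
  -- from a domain membership we deduce r < 1
  have hrlt : ∀ p q : ℝ, frDom e r p q → r < 1 := by
    rintro p q ⟨hp1, hp2, hq1, hq2, hd⟩
    have hp := hpos p hp1
    have hq := hpos q hq1
    have h := (div_lt_div_iff₀ hq hp).mp hd
    nlinarith
  have keyp : ∀ q : ℝ, -e ≤ q → r * (1 - q) ≤ 1 + q := by
    intro q hq
    have : r * (1 - q) ≤ r * (1 + e) := by
      apply mul_le_mul_of_nonneg_left (by linarith) hr0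
    linarith
  have keyq : ∀ p : ℝ, p ≤ e → r * (1 + p) ≤ 1 - p := by
    intro p hp
    have : r * (1 + p) ≤ r * (1 + e) := by
      apply mul_le_mul_of_nonneg_left (by linarith) hr0
    linarith
  have monoP : ∀ p p' q : ℝ, frDom e r p q → frDom e r p' q → p ≤ p' →
      fr r p q ≤ fr r p' q := by
    rintro p p' q ⟨hp1, hp2, hq1, hq2, hd⟩ ⟨hp1', hp2', _, _, hd'⟩ hpp
    exact fr_mono_p r p p' q hr0 (hpos p hp1) (hpos p' hp1') (hpos q hq1) hd hd'
      (keyp q hq1) hpp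
  have monoQ : ∀ p q q' : ℝ, frDom e r p q → frDom e r p q' → q ≤ q' →
      fr r p q ≤ fr r p q' := by
    rintro p q q' ⟨hp1, hp2, hq1, hq2, hd⟩ ⟨_, _, hq1', hq2', hd'⟩ hqq
    exact fr_mono_q r p q q' hr0 (hpos p hp1) (hpos q hq1) (hpos q' hq1') hd hd'
      (keyq p hp2) hqq
  refine ⟨monoP, monoQ, ?_, ?_, ?_⟩
  · rintro p q hD
    obtain ⟨hp1, hp2, hq1, hq2, hd⟩ := hD
    have hp := hpos p hp1
    have hq := hpos q hq1
    have hr1' : r < 1 := hrlt p q ⟨hp1, hp2, hq1, hq2, hd⟩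
    have hdpq : r * (1 + p) < 1 + q := by
      have := (div_lt_div_iff₀ hq hp).mp hd; linarith
    have dmm : frDom e r (-e) (-e) := by
      refine ⟨le_refl _, by linarith, le_refl _, by linarith, ?_⟩
      rw [gt_iff_lt, div_lt_div_iff₀ (by linarith : (0:ℝ) < 1 + -e) (by linarith : (0:ℝ) < 1 + -e)]
      nlinarith
    have dmq : frDom e r (-e) q := by
      refine ⟨le_refl _, by linarith, hq1, hq2, ?_⟩
      rw [gt_iff_lt, div_lt_div_iff₀ hq (by linarith : (0:ℝ) < 1 + -e)]
      nlinarith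
    have dpe : frDom e r p e := by
      refine ⟨hp1, hp2, by linarith, le_refl _, ?_⟩
      rw [gt_iff_lt, div_lt_div_iff₀ hep hp]
      nlinarith
    have dee : frDom e r e e := by
      refine ⟨by linarith, le_refl _, by linarith, le_refl _, ?_⟩
      rw [gt_iff_lt, div_lt_div_iff₀ hep hep]
      nlinarith
    constructor
    · calc fr r (-e) (-e) ≤ fr r (-e) q := monoQ _ _ _ dmm dmq (by linarith)
        _ ≤ fr r p q := monoP _ _ _ dmq ⟨hp1, hp2, hq1, hq2, hd⟩ (by linarith)
    · calc fr r p q ≤ fr r p e := monoQ _ _ _ ⟨hp1, hp2, hq1, hq2, hd⟩ dpe (by linarith)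
        _ ≤ fr r e e := monoP _ _ _ dpe dee (by linarith)
  · rcases lt_or_eq_of_le (show r ≤ 1 by nlinarith) with hr | hr
    · have h1 : (0:ℝ) < 1 - e := by linarith
      have h2 : (0:ℝ) < 1 - r := by linarith
      unfold fr
      rw [show (1:ℝ) + -e = 1 - e by ring]
      rw [show 1 / (1 - e) - 1 / (1 - e) * r = (1 - r) / (1 - e) by field_simp]
      rw [div_eq_iff (by positivity : ((1 - r) / (1 - e)) ≠ 0)]
      field_simp
      ring
    · have he : e = 0 := by nlinarith
      subst he; subst hr; unfold fr; norm_num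
  · rcases lt_or_eq_of_le (show r ≤ 1 by nlinarith) with hr | hr
    · have h2 : (0:ℝ) < 1 - r := by linarith
      unfold fr
      rw [show 1 / (1 + e) - 1 / (1 + e) * r = (1 - r) / (1 + e) by field_simp]
      rw [div_eq_iff (by positivity : ((1 - r) / (1 + e)) ≠ 0)]
      field_simp
    · have he : e = 0 := by nlinarith
      subst he; subst hr; unfold fr; norm_num
end

section
/- Let n, k be natural numbers with k + 1 ≤ n, let V be a finite set with |V| = n, let s : {1,…,k+1} → V be injective, and let b : V → ℕ satisfy b(s(j)) = j − 1 for all j ∈ {1,…,k+1} and b(v) ≤ k for all v ∈ V. Then k(k−1)(k+1)/6 ≤ (1/2)·Σ_{v∈V} b(v)(b(v)−1) ≤ k(k−1)(3n−2k−2)/6, where in the sum the term b(v)(b(v)−1) is taken to be 0 when b(v) = 0. -/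
open BigOperators

lemma term_nonneg_aux (m : ℕ) : 0 ≤ (m : ℝ) * ((m : ℝ) - 1) := by
  rcases Nat.eq_zero_or_pos m with h | h
  · simp [h]
  · have : (1 : ℝ) ≤ m := by exact_mod_cast h
    nlinarith

lemma term_le_aux (m k : ℕ) (h : m ≤ k) :
    (m : ℝ) * ((m : ℝ) - 1) ≤ (k : ℝ) * ((k : ℝ) - 1) := by
  rcases Nat.eq_zero_or_pos m with h0 | h0
  · simpa [h0] using term_nonneg_aux k
  · have h1 : (1 : ℝ) ≤ m := by exact_mod_cast h0
    have h2 : (m : ℝ) ≤ k := by exact_mod_cast h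
    nlinarith

lemma sum_formula_aux (k : ℕ) :
    ∑ j ∈ Finset.range (k + 1), ((j : ℝ) * ((j : ℝ) - 1))
      = (k : ℝ) * ((k : ℝ) - 1) * ((k : ℝ) + 1) / 3 := by
  induction k with
  | zero => simp
  | succ k ih =>
      rw [Finset.sum_range_succ, ih]
      push_cast
      ring

/-- Bounds on `M_offdiag = (1/2)·Σ_v b(v)(b(v)−1)` in the lazy fast greedy algorithm:
`k(k−1)(k+1)/6 ≤ M_offdiag ≤ k(k−1)(3n−2k−2)/6`. -/
theorem bounds_on_M_offdiag
    {V : Type*} [Fintype V]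
    (n k : ℕ) (hkn : k + 1 ≤ n) (hV : Fintype.card V = n)
    (s : Fin (k + 1) → V) (hs : Function.Injective s)
    (b : V → ℕ)
    (hbs : ∀ j : Fin (k + 1), b (s j) = (j : ℕ))
    (hbk : ∀ v : V, b v ≤ k) :
    (k : ℝ) * ((k : ℝ) - 1) * ((k : ℝ) + 1) / 6
        ≤ (1 / 2) * ∑ v : V, (b v : ℝ) * ((b v : ℝ) - 1)
    ∧ (1 / 2) * ∑ v : V, (b v : ℝ) * ((b v : ℝ) - 1)
        ≤ (k : ℝ) * ((k : ℝ) - 1) * (3 * (n : ℝ) - 2 * (k : ℝ) - 2) / 6 := by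
  classical
  set f : V → ℝ := fun v => (b v : ℝ) * ((b v : ℝ) - 1) with hf
  set S : Finset V := Finset.univ.image s with hS
  have hcardS : S.card = k + 1 := by
    rw [hS, Finset.card_image_of_injective _ hs, Finset.card_univ, Fintype.card_fin]
  have hsplit : ∑ v ∈ S, f v + ∑ v ∈ Sᶜ, f v = ∑ v : V, f v :=
    Finset.sum_add_sum_compl S f
  have hA : ∑ v ∈ S, f v = (k : ℝ) * ((k : ℝ) - 1) * ((k : ℝ) + 1) / 3 := by
    rw [hS, Finset.sum_image (fun x _ y _ h => hs h)]
    have : ∀ j : Fin (k + 1), f (s j) = (j : ℕ) * ((j : ℕ) - 1 : ℝ) := by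
      intro j; simp [hf, hbs j]
    rw [Finset.sum_congr rfl (fun j _ => this j)]
    rw [show (∑ j : Fin (k + 1), ((j : ℕ) : ℝ) * (((j : ℕ) : ℝ) - 1))
        = ∑ j ∈ Finset.range (k + 1), ((j : ℝ) * ((j : ℝ) - 1)) from
      Fin.sum_univ_eq_sum_range (fun j => (j : ℝ) * ((j : ℝ) - 1)) (k + 1)]
    exact sum_formula_aux k
  have hBnonneg : 0 ≤ ∑ v ∈ Sᶜ, f v :=
    Finset.sum_nonneg fun v _ => term_nonneg_aux (b v)
  have hcardSc : (Sᶜ : Finset V).card = n - (k + 1) := by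
    rw [Finset.card_compl, hcardS, hV]
  have hBle : ∑ v ∈ Sᶜ, f v ≤ ((n : ℝ) - (k + 1)) * ((k : ℝ) * ((k : ℝ) - 1)) := by
    calc ∑ v ∈ Sᶜ, f v ≤ ∑ _v ∈ Sᶜ, (k : ℝ) * ((k : ℝ) - 1) :=
          Finset.sum_le_sum fun v _ => term_le_aux (b v) k (hbk v)
      _ = ((Sᶜ : Finset V).card : ℝ) * ((k : ℝ) * ((k : ℝ) - 1)) := by
          rw [Finset.sum_const, nsmul_eq_mul]
      _ = ((n : ℝ) - (k + 1)) * ((k : ℝ) * ((k : ℝ) - 1)) := by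
          rw [hcardSc]
          congr 1
          have : (k : ℝ) + 1 ≤ n := by exact_mod_cast hkn
          push_cast [Nat.cast_sub hkn]
          ring
  constructor
  · rw [← hsplit, hA]; linarith
  · rw [← hsplit, hA]
    have hk : 0 ≤ (k : ℝ) * ((k : ℝ) - 1) := term_nonneg_aux k
    nlinarith [hBle, hBnonneg]
end
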